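/- arXiv:1805.00862 — 4 statements merged into one kernel-verified Lean document; each statement's English description precedes it below -/
import Mathlib

section
/- Let W be the weight matrix of a block-cycle with k blocks (k ≥ 2) on n nodes in which every node has positive out-degree, with block membership map τ, and let P be its transition matrix. Then for every l ∈ {0, 1, ..., k−1}, the vector u^l ∈ ℂ^n defined by u^l_j = exp(−2πi·l·τ(j)/k) is nonzero and satisfies P u^l = exp(−2πi·l/k) · u^l; in particular, each of the k complex numbers exp(−2πi·l/k), l = 0, ..., k−1 (the 'cycle eigenvalues', all of modulus 1), is an eigenvalue of P. -/
open Matrix Complex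

/-!
Write `ψ a = exp (-2πi·l·a/k)` for `a ∈ ℤ/kℤ`; it is an additive character, so `u = ψ ∘ τ`
satisfies `u j = ψ(1) · u i` along every edge `i → j`, since `τ j = τ i + 1` there. Each row of
`P` is a probability vector supported on the out-neighbours of its node, hence
`(P u) i = ∑ⱼ P i j · ψ(1) · u i = ψ(1) · u i`. Character values are units, so `u ≠ 0`.
-/

namespace Matrix

variable {ι R : Type*} [Fintype ι]

theorem mulVec_eq_smul_of_sum_row_eq_one [CommSemiring R] {A : Matrix ι ι R}
    (hrow : ∀ i, ∑ j, A i j = 1) {c : R} {u : ι → R}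
    (hu : ∀ i j, A i j ≠ 0 → u j = c * u i) : A *ᵥ u = c • u := by
  funext i
  calc (A *ᵥ u) i = ∑ j, A i j * (c * u i) := Finset.sum_congr rfl fun j _ => by
        by_cases h : A i j = 0
        · simp [h]
        · rw [hu i j h]
    _ = (c • u) i := by rw [← Finset.sum_mul, hrow, one_mul, Pi.smul_apply, smul_eq_mul]

theorem mulVec_addChar_comp_eq_smul [CommSemiring R] {G : Type*} [AddMonoid G]
    {A : Matrix ι ι R} (hrow : ∀ i, ∑ j, A i j = 1) {τ : ι → G} {g : G}
    (hτ : ∀ i j, A i j ≠ 0 → τ j = τ i + g) (ψ : AddChar G R) :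
    A *ᵥ (ψ ∘ τ) = ψ g • (ψ ∘ τ) :=
  mulVec_eq_smul_of_sum_row_eq_one hrow fun i j hij => by
    rw [Function.comp_apply, Function.comp_apply, hτ i j hij, AddChar.map_add_eq_mul, mul_comm]

theorem hasEigenvalue_toLin'_of_mulVec_eq_smul [DecidableEq ι] [CommRing R] {A : Matrix ι ι R}
    {μ : R} {u : ι → R} (hu : u ≠ 0) (h : A *ᵥ u = μ • u) :
    Module.End.HasEigenvalue (toLin' A) μ :=
  Module.End.hasEigenvalue_of_hasEigenvector
    ⟨by rw [Module.End.mem_eigenspace_iff, toLin'_apply, h], hu⟩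

end Matrix

theorem ZMod.stdAddChar_neg_mul_natCast {N : ℕ} [NeZero N] (l m : ℕ) :
    stdAddChar (-l * m : ZMod N) = exp (-(2 * Real.pi * I * l * m) / N) := by
  have h := stdAddChar_coe (N := N) (-(l * m : ℤ))
  push_cast at h
  rw [neg_mul, h]
  ring_nf

theorem cycle_eigenvalues_of_blockCycle_general
    {n k : ℕ} (hn : 0 < n) (hk : 2 ≤ k)
    (W : Matrix (Fin n) (Fin n) ℝ) (hWnonneg : ∀ i j, 0 ≤ W i j)
    (τ : Fin n → ZMod k)
    (hblock : ∀ i j, 0 < W i j → τ j = τ i + 1)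
    (hdeg : ∀ i, 0 < ∑ j, W i j)
    (P : Matrix (Fin n) (Fin n) ℝ) (hP : ∀ i j, P i j = W i j / ∑ t, W i t)
    (l : ℕ)
    (u : Fin n → ℂ)
    (hu : ∀ j, u j = Complex.exp (-(2 * Real.pi * Complex.I * l * ((τ j).val : ℕ)) / k)) :
    u ≠ 0 ∧
    (P.map Complex.ofReal) *ᵥ u = Complex.exp (-(2 * Real.pi * Complex.I * l) / k) • u ∧
    Module.End.HasEigenvalue (Matrix.toLin' (P.map Complex.ofReal))
      (Complex.exp (-(2 * Real.pi * Complex.I * l) / k)) := by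
  have : NeZero k := ⟨by omega⟩
  let ψ : AddChar (ZMod k) ℂ := ZMod.stdAddChar.compAddMonoidHom (AddMonoidHom.mulLeft (-l))
  have hψ : ∀ m : ℕ, ψ m = exp (-(2 * Real.pi * I * l * m) / k) :=
    ZMod.stdAddChar_neg_mul_natCast l
  have hu_eq : u = ψ ∘ τ := funext fun j => by
    rw [hu, ← hψ, Function.comp_apply, ZMod.natCast_zmod_val]
  have hψ_one : exp (-(2 * Real.pi * I * l) / k) = ψ 1 := by
    simpa using (hψ 1).symm
  have hrow : ∀ i, ∑ j, P.map ofReal i j = 1 := fun i => by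
    simp_rw [map_apply, ← ofReal_sum, hP, ← Finset.sum_div, div_self (hdeg i).ne', ofReal_one]
  have hedge : ∀ i j, P.map ofReal i j ≠ 0 → τ j = τ i + 1 := fun i j hij => by
    refine hblock i j ((hWnonneg i j).lt_of_ne' fun hW => hij ?_)
    rw [map_apply, hP, hW, zero_div, ofReal_zero]
  have hu_ne : u ≠ 0 := fun h =>
    (ψ.val_isUnit (τ ⟨0, hn⟩)).ne_zero (by simpa [hu_eq] using congrFun h ⟨0, hn⟩)
  have heig : P.map ofReal *ᵥ u = exp (-(2 * Real.pi * I * l) / k) • u := by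
    rw [hψ_one, hu_eq]
    exact mulVec_addChar_comp_eq_smul hrow hedge ψ
  exact ⟨hu_ne, heig, hasEigenvalue_toLin'_of_mulVec_eq_smul hu_ne heig⟩

/-- **Cycle eigenvalues of a block-cycle.**
Let `W` be the weight matrix of a block-cycle with `k` blocks (`k ≥ 2`) on `n` nodes in which
every node has positive out-degree, with block membership map `τ`, and let `P` be its transition
matrix. Then for every `l ∈ {0, …, k−1}`, the vector `u` defined by
`u j = exp(−2πi·l·τ(j)/k)` is nonzero and satisfies `P u = exp(−2πi·l/k) • u`; in particular
each of the `k` cycle eigenvalues `exp(−2πi·l/k)` is an eigenvalue of `P`. -/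
theorem cycle_eigenvalues_of_blockCycle
    {n k : ℕ} (hn : 0 < n) (hk : 2 ≤ k)
    (W : Matrix (Fin n) (Fin n) ℝ) (hWnonneg : ∀ i j, 0 ≤ W i j)
    (τ : Fin n → ZMod k) (hτsurj : Function.Surjective τ)
    (hblock : ∀ i j, 0 < W i j → τ j = τ i + 1)
    (hdeg : ∀ i, 0 < ∑ j, W i j)
    (P : Matrix (Fin n) (Fin n) ℝ) (hP : ∀ i j, P i j = W i j / ∑ t, W i t)
    (l : ℕ) (hl : l < k)
    (u : Fin n → ℂ)
    (hu : ∀ j, u j = Complex.exp (-(2 * Real.pi * Complex.I * l * ((τ j).val : ℕ)) / k)) :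
    u ≠ 0 ∧
    (P.map Complex.ofReal) *ᵥ u = Complex.exp (-(2 * Real.pi * Complex.I * l) / k) • u ∧
    Module.End.HasEigenvalue (Matrix.toLin' (P.map Complex.ofReal))
      (Complex.exp (-(2 * Real.pi * Complex.I * l) / k)) :=
  cycle_eigenvalues_of_blockCycle_general hn hk W hWnonneg τ hblock hdeg P hP l u hu
end

section
/- Let W be the weight matrix of a block-cycle with k blocks (k ≥ 2) on n nodes in which every node has positive out-degree, with block membership map τ, and let P be its transition matrix. Suppose y⁰ ∈ ℝ^n is a left eigenvector of P for eigenvalue 1, i.e. (y⁰)ᵀ P = (y⁰)ᵀ. Then for every l ∈ {0, 1, ..., k−1}, the vector z^l ∈ ℂ^n defined by z^l_j = y⁰_j · exp(2πi·l·τ(j)/k) satisfies (z^l)ᵀ P = exp(−2πi·l/k) · (z^l)ᵀ; that is, z^l is a left eigenvector of P associated to the cycle eigenvalue exp(−2πi·l/k). -/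
/-!
The phase `j ↦ exp (2πi·l·τ(j)/k)` is the additive character `m ↦ exp (2πi·l·m/k)` of `ZMod k`
composed with `τ`. Along every edge `i → j` the block index increases by one, so the phase at `i`
is `exp (−2πi·l/k)` times the phase at `j`. Multiplying a left eigenvector of `P` entrywise by
such a phase therefore multiplies its eigenvalue by `exp (−2πi·l/k)`.
-/

open Matrix Complex

theorem Matrix.vecMul_mul_eq_smul_mul_of_ratio {ι R : Type*} [Fintype ι] [CommSemiring R]
    (P : Matrix ι ι R) (y χ : ι → R) (c : R) (hχ : ∀ i j, P i j ≠ 0 → χ i = c * χ j) :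
    (y * χ) ᵥ* P = c • ((y ᵥ* P) * χ) := by
  funext j
  have hterm : ∀ i, y i * χ i * P i j = c * χ j * (y i * P i j) := fun i => by
    by_cases hP : P i j = 0
    · simp [hP]
    · rw [hχ i j hP]; ring
  simp only [vecMul, dotProduct, Pi.mul_apply, Pi.smul_apply, smul_eq_mul, hterm,
    ← Finset.mul_sum]
  ring

namespace ZMod

open scoped Real

theorem stdAddChar_natCast_mul {k : ℕ} [NeZero k] (l : ℕ) (m : ZMod k) :
    stdAddChar ((l : ZMod k) * m) = exp (2 * π * I * l * (m.val : ℕ) / k) := by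
  rw [← natCast_zmod_val m, ← Nat.cast_mul, stdAddChar_apply, toCircle_natCast, natCast_zmod_val]
  push_cast
  ring_nf

theorem stdAddChar_neg_natCast {k : ℕ} [NeZero k] (l : ℕ) :
    stdAddChar (-(l : ZMod k)) = exp (-(2 * π * I * l) / k) := by
  have := stdAddChar_coe (N := k) (-(l : ℤ))
  push_cast at this
  rw [this]
  ring_nf

end ZMod

theorem left_cycle_eigenvectors_of_blockCycle_general
    {n k : ℕ} (hk : 2 ≤ k)
    (W : Matrix (Fin n) (Fin n) ℝ) (hWnonneg : ∀ i j, 0 ≤ W i j)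
    (τ : Fin n → ZMod k)
    (hblock : ∀ i j, 0 < W i j → τ j = τ i + 1)
    (P : Matrix (Fin n) (Fin n) ℝ) (hP : ∀ i j, P i j = W i j / ∑ t, W i t)
    (y0 : Fin n → ℝ) (hy0 : y0 ᵥ* P = y0)
    (l : ℕ)
    (z : Fin n → ℂ)
    (hz : ∀ j, z j = (y0 j : ℂ) *
      Complex.exp ((2 * Real.pi * Complex.I * l * ((τ j).val : ℕ)) / k)) :
    z ᵥ* (P.map Complex.ofReal) = Complex.exp (-(2 * Real.pi * Complex.I * l) / k) • z := by
  have : NeZero k := ⟨by omega⟩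
  set χ : Fin n → ℂ := fun j => ZMod.stdAddChar ((l : ZMod k) * τ j)
  have hz' : z = (ofReal ∘ y0) * χ := funext fun j => by
    simp only [hz, χ, ZMod.stdAddChar_natCast_mul, Pi.mul_apply, Function.comp_apply]
  have hy : (ofReal ∘ y0) ᵥ* P.map ofReal = ofReal ∘ y0 := funext fun j => by
    have h := RingHom.map_vecMul ofRealHom P y0 j
    rw [hy0] at h
    exact h.symm
  have hχ : ∀ i j, P.map ofReal i j ≠ 0 →
      χ i = ZMod.stdAddChar (-(l : ZMod k)) * χ j := fun i j hPij => by
    have hW : 0 < W i j := (hWnonneg i j).lt_of_ne fun h => hPij (by simp [hP, ← h])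
    simp only [χ, hblock i j hW, ← AddChar.map_add_eq_mul]
    ring_nf
  rw [hz', vecMul_mul_eq_smul_mul_of_ratio _ _ _ _ hχ, hy, ZMod.stdAddChar_neg_natCast]

/-- **Left eigenvectors of a block-cycle associated to the cycle eigenvalues.**
Let `W` be the weight matrix of a block-cycle with `k` blocks (`k ≥ 2`) on `n` nodes in which
every node has positive out-degree, with block membership map `τ`, and let `P` be its transition
matrix. If `y⁰` is a left eigenvector of `P` for eigenvalue `1`, then for every
`l ∈ {0, …, k−1}`, the vector `z` defined by `z j = y⁰ j · exp(2πi·l·τ(j)/k)` is a left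
eigenvector of `P` associated to the cycle eigenvalue `exp(−2πi·l/k)`. -/
theorem left_cycle_eigenvectors_of_blockCycle
    {n k : ℕ} (hn : 0 < n) (hk : 2 ≤ k)
    (W : Matrix (Fin n) (Fin n) ℝ) (hWnonneg : ∀ i j, 0 ≤ W i j)
    (τ : Fin n → ZMod k) (hτsurj : Function.Surjective τ)
    (hblock : ∀ i j, 0 < W i j → τ j = τ i + 1)
    (hdeg : ∀ i, 0 < ∑ j, W i j)
    (P : Matrix (Fin n) (Fin n) ℝ) (hP : ∀ i j, P i j = W i j / ∑ t, W i t)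
    (y0 : Fin n → ℝ) (hy0 : y0 ᵥ* P = y0)
    (l : ℕ) (hl : l < k)
    (z : Fin n → ℂ)
    (hz : ∀ j, z j = (y0 j : ℂ) *
      Complex.exp ((2 * Real.pi * Complex.I * l * ((τ j).val : ℕ)) / k)) :
    z ᵥ* (P.map Complex.ofReal) = Complex.exp (-(2 * Real.pi * Complex.I * l) / k) • z :=
  left_cycle_eigenvectors_of_blockCycle_general hk W hWnonneg τ hblock P hP y0 hy0 l z hz
end

section
/- Let W, Ŵ ∈ ℝ^{n×n} be nonnegative with Ŵ obtained from W by appending edges (Ŵ_{ij} ≥ W_{ij} for all i, j, and Ŵ_{ij} = W_{ij} whenever W_{ij} > 0), and suppose every row sum d_i^out = ∑_j W_{ij} is positive. Let P and P̂ be the transition matrices of W and Ŵ, and let ρ = max_i (d̂_i^out − d_i^out)/d_i^out where d̂_i^out = ∑_j Ŵ_{ij}. Then for every row s: ∑_j |P̂_{sj} − P_{sj}| = 2·(1 − d_s^out/d̂_s^out) ≤ 2ρ/(ρ + 1). -/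
/-! If `Ŵ` only appends edges to `W`, then in row `s` the entries of `P̂ - P` are `≥ 0` on new
edges and `≤ 0` on old ones. Both rows sum to `1`, so `∑ⱼ |P̂ₛⱼ - Pₛⱼ|` is twice the mass
`1 - dₛ/d̂ₛ` that `P̂` moves onto new edges. With `r = (d̂ₛ - dₛ)/dₛ ≤ ρ` this mass is `r/(r+1)`,
which is monotone in `r`. -/

lemma abs_div_sub_div_of_extends {a b d e : ℝ} (ha : 0 ≤ a) (hab : a ≤ b)
    (hsupp : 0 < a → b = a) (hd : 0 < d) (hde : d ≤ e) :
    |b / e - a / d| = (b - a) / e + a * (1 / d - 1 / e) := by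
  have he : 0 < e := hd.trans_le hde
  rcases ha.eq_or_lt with rfl | ha
  · rw [zero_div, sub_zero, abs_of_nonneg (div_nonneg hab he.le)]
    ring
  · rw [hsupp ha, abs_of_nonpos (sub_nonpos.mpr (div_le_div_of_nonneg_left ha.le hd hde))]
    ring

lemma sum_abs_div_sum_sub_div_sum_of_extends {ι : Type*} [Fintype ι] {w ŵ : ι → ℝ}
    (hw : ∀ j, 0 ≤ w j) (hle : ∀ j, w j ≤ ŵ j) (hsupp : ∀ j, 0 < w j → ŵ j = w j)
    (hpos : 0 < ∑ j, w j) :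
    ∑ j, |ŵ j / ∑ t, ŵ t - w j / ∑ t, w t| = 2 * (1 - (∑ j, w j) / ∑ j, ŵ j) := by
  have hsum_le : ∑ j, w j ≤ ∑ j, ŵ j := Finset.sum_le_sum fun j _ => hle j
  have hŵpos : 0 < ∑ j, ŵ j := hpos.trans_le hsum_le
  simp only [abs_div_sub_div_of_extends (hw _) (hle _) (hsupp _) hpos hsum_le]
  rw [Finset.sum_add_distrib, ← Finset.sum_div, ← Finset.sum_mul, Finset.sum_sub_distrib]
  field_simp
  ring

lemma one_sub_div_eq_div_add_one {d e : ℝ} (hd : d ≠ 0) (he : e ≠ 0) :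
    1 - d / e = (e - d) / d / ((e - d) / d + 1) := by
  rw [div_add_one hd, sub_add_cancel, div_div_div_cancel_right₀ hd]
  field_simp

lemma div_add_one_le_div_add_one {r ρ : ℝ} (hr : 0 ≤ r) (hrρ : r ≤ ρ) :
    r / (r + 1) ≤ ρ / (ρ + 1) := by
  rw [div_le_div_iff₀ (by linarith) (by linarith)]
  nlinarith

theorem row_perturbation_of_transition_matrix_general
    {n : ℕ}
    (W What : Matrix (Fin n) (Fin n) ℝ)
    (hWnonneg : ∀ i j, 0 ≤ W i j)
    (hle : ∀ i j, W i j ≤ What i j)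
    (hsupp : ∀ i j, 0 < W i j → What i j = W i j)
    (hdeg : ∀ i, 0 < ∑ j, W i j)
    (P Phat : Matrix (Fin n) (Fin n) ℝ)
    (hP : ∀ i j, P i j = W i j / ∑ t, W i t)
    (hPhat : ∀ i j, Phat i j = What i j / ∑ t, What i t)
    (ρ : ℝ)
    (hρ : IsGreatest (Set.range fun i : Fin n =>
      ((∑ j, What i j) - ∑ j, W i j) / ∑ j, W i j) ρ) :
    ∀ s : Fin n,
      (∑ j, |Phat s j - P s j|) = 2 * (1 - (∑ j, W s j) / (∑ j, What s j)) ∧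
      (∑ j, |Phat s j - P s j|) ≤ 2 * ρ / (ρ + 1) := by
  intro s
  have hd := hdeg s
  have hsum_le : ∑ j, W s j ≤ ∑ j, What s j := Finset.sum_le_sum fun j _ => hle s j
  have hdist : ∑ j, |Phat s j - P s j| = 2 * (1 - (∑ j, W s j) / ∑ j, What s j) := by
    simp only [hP, hPhat]
    exact sum_abs_div_sum_sub_div_sum_of_extends (hWnonneg s) (hle s) (hsupp s) hd
  refine ⟨hdist, ?_⟩
  have hr : 0 ≤ ((∑ j, What s j) - ∑ j, W s j) / ∑ j, W s j :=
    div_nonneg (sub_nonneg.mpr hsum_le) hd.le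
  rw [hdist, mul_div_assoc, one_sub_div_eq_div_add_one hd.ne' (hd.trans_le hsum_le).ne']
  exact mul_le_mul_of_nonneg_left (div_add_one_le_div_add_one hr (hρ.2 ⟨s, rfl⟩)) zero_le_two

/-- **Row-wise perturbation of the transition matrix.**
Let `Ŵ` be obtained from `W` by appending edges (`Ŵ ≥ W` entrywise, agreeing with `W` on the
support of `W`), with all row sums of `W` positive. With `P`, `P̂` the transition matrices and
`ρ = max_i (d̂ᵢᵒᵘᵗ − dᵢᵒᵘᵗ)/dᵢᵒᵘᵗ`, every row `s` satisfies
`∑ⱼ |P̂ₛⱼ − Pₛⱼ| = 2(1 − dₛᵒᵘᵗ/d̂ₛᵒᵘᵗ) ≤ 2ρ/(ρ+1)`. -/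
theorem row_perturbation_of_transition_matrix
    {n : ℕ} (hn : 0 < n)
    (W What : Matrix (Fin n) (Fin n) ℝ)
    (hWnonneg : ∀ i j, 0 ≤ W i j)
    (hle : ∀ i j, W i j ≤ What i j)
    (hsupp : ∀ i j, 0 < W i j → What i j = W i j)
    (hdeg : ∀ i, 0 < ∑ j, W i j)
    (P Phat : Matrix (Fin n) (Fin n) ℝ)
    (hP : ∀ i j, P i j = W i j / ∑ t, W i t)
    (hPhat : ∀ i j, Phat i j = What i j / ∑ t, What i t)
    (ρ : ℝ)
    (hρ : IsGreatest (Set.range fun i : Fin n =>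
      ((∑ j, What i j) - ∑ j, W i j) / ∑ j, W i j) ρ) :
    ∀ s : Fin n,
      (∑ j, |Phat s j - P s j|) = 2 * (1 - (∑ j, W s j) / (∑ j, What s j)) ∧
      (∑ j, |Phat s j - P s j|) ≤ 2 * ρ / (ρ + 1) :=
  row_perturbation_of_transition_matrix_general W What hWnonneg hle hsupp hdeg P Phat hP hPhat ρ hρ
end

section
/- Let W, Ŵ ∈ ℝ^{n×n} be nonnegative with Ŵ obtained from W by appending edges (Ŵ_{ij} ≥ W_{ij} for all i, j, and Ŵ_{ij} = W_{ij} whenever W_{ij} > 0), and suppose every row sum d_i^out = ∑_j W_{ij} is positive and every column sum d̂_j^in = ∑_i Ŵ_{ij} is positive. Let P and P̂ be the transition matrices of W and Ŵ, ρ = max_i (d̂_i^out − d_i^out)/d_i^out, and σ = max over pairs (i,j) with Ŵ_{ij} > 0 of d̂_j^in/d̂_i^out. Then for every column t: ∑_s |P̂_{st} − P_{st}| ≤ σ·(ρ + 1). -/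
/-!
Entrywise, `P̂ₛₜ ≤ σ Ŵₛₜ / d̂ₜⁱⁿ` by the definition of `σ`, and these bounds sum over `s` to `σ`.
On an old edge (`Wₛₜ > 0`) only the row normalisation changes, so `Pₛₜ - P̂ₛₜ = P̂ₛₜ (d̂ₛ - dₛ)/dₛ`
is at most `ρ P̂ₛₜ`; on a new edge `Pₛₜ = 0`. Either way `|P̂ₛₜ - Pₛₜ| ≤ (ρ + 1) P̂ₛₜ`.
-/

open Matrix Finset

namespace Matrix

variable {m n : Type*} [Fintype n]

noncomputable def transitionMatrix (W : Matrix m n ℝ) : Matrix m n ℝ :=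
  fun i j => W i j / ∑ t, W i t

lemma transitionMatrix_nonneg {W : Matrix m n ℝ} (hW : ∀ i j, 0 ≤ W i j) (i : m) (j : n) :
    0 ≤ transitionMatrix W i j :=
  div_nonneg (hW i j) (sum_nonneg fun t _ => hW i t)

variable {W What : Matrix m n ℝ}

lemma transitionMatrix_sub_eq_of_pos (hWnonneg : ∀ i j, 0 ≤ W i j)
    (hle : ∀ i j, W i j ≤ What i j) (hsupp : ∀ i j, 0 < W i j → What i j = W i j)
    {i : m} {j : n} (hij : 0 < W i j) :
    transitionMatrix W i j - transitionMatrix What i j =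
      transitionMatrix What i j * (((∑ t, What i t) - ∑ t, W i t) / ∑ t, W i t) := by
  have hd : 0 < ∑ t, W i t := hij.trans_le (single_le_sum (fun t _ => hWnonneg i t) (mem_univ j))
  have hdhat : 0 < ∑ t, What i t := hd.trans_le (sum_le_sum fun t _ => hle i t)
  simp only [transitionMatrix, hsupp i j hij]
  field_simp

lemma abs_transitionMatrix_sub_le (hWnonneg : ∀ i j, 0 ≤ W i j)
    (hle : ∀ i j, W i j ≤ What i j) (hsupp : ∀ i j, 0 < W i j → What i j = W i j)
    {ρ : ℝ} (hρ0 : 0 ≤ ρ) (hρ : ∀ i, ((∑ t, What i t) - ∑ t, W i t) / ∑ t, W i t ≤ ρ)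
    (i : m) (j : n) :
    |transitionMatrix What i j - transitionMatrix W i j| ≤
      transitionMatrix What i j * (ρ + 1) := by
  have hPhat := transitionMatrix_nonneg (fun i j => (hWnonneg i j).trans (hle i j)) i j
  rcases (hWnonneg i j).lt_or_eq with hij | hij
  · have hdhat : ∑ t, W i t ≤ ∑ t, What i t := sum_le_sum fun t _ => hle i t
    have hP : transitionMatrix What i j ≤ transitionMatrix W i j := by
      rw [← sub_nonneg, transitionMatrix_sub_eq_of_pos hWnonneg hle hsupp hij]
      exact mul_nonneg hPhat (div_nonneg (sub_nonneg.2 hdhat) (sum_nonneg fun t _ => hWnonneg i t))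
    rw [abs_sub_comm, abs_of_nonneg (sub_nonneg.2 hP),
      transitionMatrix_sub_eq_of_pos hWnonneg hle hsupp hij]
    exact mul_le_mul_of_nonneg_left (by linarith [hρ i]) hPhat
  · have hP : transitionMatrix W i j = 0 := by simp [transitionMatrix, ← hij]
    rw [hP, sub_zero, abs_of_nonneg hPhat]
    exact le_mul_of_one_le_right hPhat (by linarith)

lemma transitionMatrix_le_mul_div_sum_col [Fintype m] (hWhat : ∀ i j, 0 ≤ What i j) {σ : ℝ}
    (hσ : ∀ i j, 0 < What i j → (∑ s, What s j) / (∑ t, What i t) ≤ σ) (i : m) (j : n) :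
    transitionMatrix What i j ≤ σ * (What i j / ∑ s, What s j) := by
  rcases (hWhat i j).lt_or_eq with hij | hij
  · have hcol : 0 < ∑ s, What s j :=
      hij.trans_le (single_le_sum (fun s _ => hWhat s j) (mem_univ i))
    calc transitionMatrix What i j
        = What i j / (∑ s, What s j) * ((∑ s, What s j) / ∑ t, What i t) := by
          rw [transitionMatrix, div_mul_div_cancel₀ hcol.ne']
      _ ≤ What i j / (∑ s, What s j) * σ :=
          mul_le_mul_of_nonneg_left (hσ i j hij) (div_nonneg hij.le hcol.le)
      _ = σ * (What i j / ∑ s, What s j) := mul_comm _ _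
  · simp [transitionMatrix, ← hij]

lemma sum_transitionMatrix_col_le [Fintype m] (hWhat : ∀ i j, 0 ≤ What i j) {σ : ℝ} (hσ0 : 0 ≤ σ)
    (hσ : ∀ i j, 0 < What i j → (∑ s, What s j) / (∑ t, What i t) ≤ σ) (j : n) :
    ∑ s, transitionMatrix What s j ≤ σ :=
  calc ∑ s, transitionMatrix What s j
      ≤ ∑ s, σ * (What s j / ∑ r, What r j) :=
        sum_le_sum fun s _ => transitionMatrix_le_mul_div_sum_col hWhat hσ s j
    _ = σ * ((∑ s, What s j) / ∑ r, What r j) := by rw [← mul_sum, sum_div]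
    _ ≤ σ := mul_le_of_le_one_right hσ0 (div_self_le_one _)

end Matrix

theorem column_perturbation_of_transition_matrix_general
    {n : ℕ}
    (W What : Matrix (Fin n) (Fin n) ℝ)
    (hWnonneg : ∀ i j, 0 ≤ W i j)
    (hle : ∀ i j, W i j ≤ What i j)
    (hsupp : ∀ i j, 0 < W i j → What i j = W i j)
    (P Phat : Matrix (Fin n) (Fin n) ℝ)
    (hP : ∀ i j, P i j = W i j / ∑ t, W i t)
    (hPhat : ∀ i j, Phat i j = What i j / ∑ t, What i t)
    (ρ : ℝ)
    (hρ : IsGreatest (Set.range fun i : Fin n =>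
      ((∑ j, What i j) - ∑ j, W i j) / ∑ j, W i j) ρ)
    (σ : ℝ)
    (hσ : IsGreatest {x : ℝ | ∃ i j, 0 < What i j ∧
      x = (∑ s, What s j) / (∑ t, What i t)} σ) :
    ∀ t : Fin n, (∑ s, |Phat s t - P s t|) ≤ σ * (ρ + 1) := by
  intro t
  have hWhat : ∀ i j, 0 ≤ What i j := fun i j => (hWnonneg i j).trans (hle i j)
  obtain rfl : P = transitionMatrix W := Matrix.ext hP
  obtain rfl : Phat = transitionMatrix What := Matrix.ext hPhat
  have hρ0 : 0 ≤ ρ := by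
    obtain ⟨i, rfl⟩ := hρ.1
    exact div_nonneg (sub_nonneg.2 (sum_le_sum fun j _ => hle i j))
      (sum_nonneg fun j _ => hWnonneg i j)
  have hσ0 : 0 ≤ σ := by
    obtain ⟨i, j, -, rfl⟩ := hσ.1
    exact div_nonneg (sum_nonneg fun s _ => hWhat s j) (sum_nonneg fun s _ => hWhat i s)
  calc ∑ s, |transitionMatrix What s t - transitionMatrix W s t|
      ≤ ∑ s, transitionMatrix What s t * (ρ + 1) := sum_le_sum fun s _ =>
        abs_transitionMatrix_sub_le hWnonneg hle hsupp hρ0 (fun i => hρ.2 ⟨i, rfl⟩) s t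
    _ = (∑ s, transitionMatrix What s t) * (ρ + 1) := (sum_mul ..).symm
    _ ≤ σ * (ρ + 1) := mul_le_mul_of_nonneg_right
        (sum_transitionMatrix_col_le hWhat hσ0 (fun i j hij => hσ.2 ⟨i, j, hij, rfl⟩) t)
        (by linarith)

/-- **Column-wise perturbation of the transition matrix.**
Let `Ŵ` be obtained from `W` by appending edges (`Ŵ ≥ W` entrywise, agreeing with `W` on the
support of `W`), with all row sums of `W` positive and all column sums of `Ŵ` positive. With
`P`, `P̂` the transition matrices, `ρ = max_i (d̂ᵢᵒᵘᵗ − dᵢᵒᵘᵗ)/dᵢᵒᵘᵗ` and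
`σ = max over (i,j) with Ŵᵢⱼ > 0 of d̂ⱼⁱⁿ/d̂ᵢᵒᵘᵗ`, every column `t` satisfies
`∑ₛ |P̂ₛₜ − Pₛₜ| ≤ σ(ρ+1)`. -/
theorem column_perturbation_of_transition_matrix
    {n : ℕ} (hn : 0 < n)
    (W What : Matrix (Fin n) (Fin n) ℝ)
    (hWnonneg : ∀ i j, 0 ≤ W i j)
    (hle : ∀ i j, W i j ≤ What i j)
    (hsupp : ∀ i j, 0 < W i j → What i j = W i j)
    (hdeg : ∀ i, 0 < ∑ j, W i j)
    (hcol : ∀ j, 0 < ∑ i, What i j)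
    (P Phat : Matrix (Fin n) (Fin n) ℝ)
    (hP : ∀ i j, P i j = W i j / ∑ t, W i t)
    (hPhat : ∀ i j, Phat i j = What i j / ∑ t, What i t)
    (ρ : ℝ)
    (hρ : IsGreatest (Set.range fun i : Fin n =>
      ((∑ j, What i j) - ∑ j, W i j) / ∑ j, W i j) ρ)
    (σ : ℝ)
    (hσ : IsGreatest {x : ℝ | ∃ i j, 0 < What i j ∧
      x = (∑ s, What s j) / (∑ t, What i t)} σ) :
    ∀ t : Fin n, (∑ s, |Phat s t - P s t|) ≤ σ * (ρ + 1) :=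
  column_perturbation_of_transition_matrix_general W What hWnonneg hle hsupp P Phat hP hPhat ρ hρ σ
    hσ
end
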